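/- Let n ≥ 3 be an integer and let m ≥ 1 be an integer satisfying 3(m−1)(m+2) < (n−1)(n−2) (in particular this holds for the largest integer m with (3/2)(m−1)(m+2) < C(n−1,2)). Then for every integer t with C(n,3) + 1 ≤ t ≤ C(n,3) + C(m+1,2) − 1, we have φ(t) ≤ n − 1. -/

import Mathlib

open Finset Matrix

/-- The sign `[T : e]` of an edge `e` in a triangle `T`. -/
noncomputable def triSign (T e : Finset ℕ) : ℝ :=
  if e ⊆ T ∧ e.card = 2 ∧ T.card = 3 then
    if (T \ e).max = T.max ∨ (T \ e).min = T.min then 1 else -1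
  else 0

/-- A triangle family: a nonempty finite set of 3-element subsets of ℕ. -/
def IsTriFam (F : Finset (Finset ℕ)) : Prop :=
  F.Nonempty ∧ ∀ T ∈ F, T.card = 3

/-- The edges of the support graph of a triangle family. -/
def edgesOf (F : Finset (Finset ℕ)) : Finset (Finset ℕ) :=
  F.biUnion fun T => T.powersetCard 2

/-- The vertices of the support graph of a triangle family. -/
def vertsOf (F : Finset (Finset ℕ)) : Finset ℕ :=
  F.biUnion id

/-- The signed edge-triangle incidence matrix of a triangle family. -/
noncomputable def delta1 (F : Finset (Finset ℕ)) :
    Matrix {T // T ∈ F} {e // e ∈ edgesOf F} ℝ :=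
  Matrix.of fun T e => triSign T.1 e.1

/-- The smallest positive eigenvalue of a matrix. -/
noncomputable def lambdaMinPos {m : Type*} [Fintype m] (M : Matrix m m ℝ) : ℝ :=
  sInf {μ : ℝ | 0 < μ ∧ ∃ v : m → ℝ, v ≠ 0 ∧ M.mulVec v = μ • v}

/-- `λ(𝒯)`: the smallest positive eigenvalue of `δ₁(𝒯)ᵀ δ₁(𝒯)`. -/
noncomputable def lam (F : Finset (Finset ℕ)) : ℝ :=
  lambdaMinPos ((delta1 F)ᵀ * delta1 F)

/-- The neighborhood of `x` in the support graph `Γ₀(F)`. -/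
def nbrs (F : Finset (Finset ℕ)) (x : ℕ) : Finset ℕ :=
  (vertsOf F).filter fun y => x ≠ y ∧ ∃ T ∈ F, x ∈ T ∧ y ∈ T

/-- `φ(t)`: the maximum of `λ(𝒯)` over triangle families with `|𝒯| = t`. -/
noncomputable def phi (t : ℕ) : ℝ :=
  sSup {r : ℝ | ∃ F : Finset (Finset ℕ), IsTriFam F ∧ F.card = t ∧ lam F = r}

/-- `Λ(t) = max_{1 ≤ s ≤ t} φ(s)`. -/
noncomputable def Lam (t : ℕ) : ℝ :=
  sSup {r : ℝ | ∃ s : ℕ, 1 ≤ s ∧ s ≤ t ∧ phi s = r}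

/-- `H(n) = min{ s ≥ 1 : φ(C(n,3)+s) > n - 1 }`. -/
noncomputable def Hfun (n : ℕ) : ℕ :=
  sInf {s : ℕ | 1 ≤ s ∧ (n : ℝ) - 1 < phi (n.choose 3 + s)}

/-- The triangle family `𝒯_{c,b}`: all 3-cliques of `K_c ∨ (b isolated vertices)`. -/
def Tcb (c b : ℕ) : Finset (Finset ℕ) :=
  ((Finset.Icc 1 c).powersetCard 3) ∪
    (Finset.Icc (c+1) (c+b)).biUnion
      (fun i => ((Finset.Icc 1 c).powersetCard 2).image (fun p => insert i p))

/-!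
Write `d(e)` for the number of triangles through an edge `e`. On the indicator vector `x` of `e`,
`M = δ₁ᵀ δ₁` satisfies `⟪M x, x⟫ = d(e)` and `‖M x‖² ≤ d(e)² + 2 d(e)`, because two distinct edges
lie in at most one common triangle; expanding `x` in an eigenbasis of `M`, this forces an
eigenvalue of `M` in `(0, d(e) + 2]`. Hence `λ ≤ n - 1` as soon as some edge has `d(e) ≤ n - 3`.
Otherwise every edge lies in at least `n - 2` triangles, so every vertex lies in at least `n - 1`
edges, and double counting gives `(n - 2)(n - 1)|V| ≤ 6t`. As `t > C(n,3)` forces `|V| ≥ n + 1`,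
this contradicts `6t < (n - 2)(n - 1)(n + 1)`, which is what the bound on `m` guarantees.
-/

theorem LinearMap.IsSymmetric.exists_hasEigenvalue_mem_Ioc {E : Type*} [NormedAddCommGroup E]
    [InnerProductSpace ℝ E] [FiniteDimensional ℝ E] {T : E →ₗ[ℝ] E} (hT : T.IsSymmetric)
    {x : E} {B : ℝ} (hpos : 0 < inner ℝ (T x) x) (hle : ‖T x‖ ^ 2 ≤ B * inner ℝ (T x) x) :
    ∃ μ ∈ Set.Ioc 0 B, Module.End.HasEigenvalue T μ := by
  set b := hT.eigenvectorBasis rfl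
  set μ := hT.eigenvalues rfl
  set c := b.repr x
  have hrepr : ∀ i, b.repr (T x) i = μ i * c i := hT.eigenvectorBasis_apply_self_apply rfl x
  have hinner : inner ℝ (T x) x = ∑ i, μ i * c i ^ 2 := by
    rw [← b.repr.inner_map_map, PiLp.inner_apply]
    refine Finset.sum_congr rfl fun i _ => ?_
    rw [hrepr, Real.inner_apply]
    ring
  have hnorm : ‖T x‖ ^ 2 = ∑ i, (μ i * c i) ^ 2 := by
    rw [← b.repr.norm_map, EuclideanSpace.norm_sq_eq]
    simp_rw [hrepr, Real.norm_eq_abs, sq_abs]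
  by_contra! hnone
  have hB : 0 ≤ B := by
    by_contra! hB
    nlinarith [sq_nonneg ‖T x‖]
  have hμ : ∀ i, μ i ≤ 0 ∨ B < μ i := fun i => by
    by_contra! h
    exact hnone (μ i) h (hT.hasEigenvalue_eigenvalues rfl i)
  obtain ⟨i, -, hi⟩ := Finset.exists_lt_of_sum_lt (by simpa [hinner] using hpos :
    ∑ _i : Fin _, (0 : ℝ) < ∑ i, μ i * c i ^ 2)
  -- With no eigenvalue in `(0, B]` every term is `≥ 0`, and the term where `μᵢ cᵢ² > 0` is `> 0`.
  have hsum : 0 < ∑ i, μ i * (μ i - B) * c i ^ 2 := by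
    refine Finset.sum_pos' (fun j _ => ?_) ⟨i, Finset.mem_univ _, ?_⟩
    · rcases hμ j with h | h
      · exact mul_nonneg (mul_nonneg_of_nonpos_of_nonpos h (by linarith)) (sq_nonneg _)
      · exact mul_nonneg (mul_nonneg (by linarith) (by linarith)) (sq_nonneg _)
    · have hμi : B < μ i := (hμ i).resolve_left fun h => by nlinarith [sq_nonneg (c i)]
      nlinarith
  have hsum_eq : ∑ i, μ i * (μ i - B) * c i ^ 2 = ‖T x‖ ^ 2 - B * inner ℝ (T x) x := by
    rw [hnorm, hinner, Finset.mul_sum, ← Finset.sum_sub_distrib]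
    exact Finset.sum_congr rfl fun j _ => by ring
  linarith

lemma lambdaMinPos_le_of_dotProduct_le {ι : Type*} [Fintype ι] [DecidableEq ι]
    {M : Matrix ι ι ℝ} (hM : M.IsHermitian) {x : ι → ℝ} {B : ℝ} (hpos : 0 < M *ᵥ x ⬝ᵥ x)
    (hle : M *ᵥ x ⬝ᵥ M *ᵥ x ≤ B * (M *ᵥ x ⬝ᵥ x)) : lambdaMinPos M ≤ B := by
  have hinner : ∀ u v : ι → ℝ, inner ℝ (WithLp.toLp 2 u) (WithLp.toLp 2 v) = u ⬝ᵥ v := by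
    intro u v
    simp [EuclideanSpace.inner_eq_star_dotProduct, dotProduct_comm]
  have hT : (toEuclideanLin M).IsSymmetric := isSymmetric_toEuclideanLin_iff.mpr hM
  have hpos' : 0 < inner ℝ (toEuclideanLin M (WithLp.toLp 2 x)) (WithLp.toLp 2 x) := by
    simpa [hinner] using hpos
  have hle' : ‖toEuclideanLin M (WithLp.toLp 2 x)‖ ^ 2 ≤
      B * inner ℝ (toEuclideanLin M (WithLp.toLp 2 x)) (WithLp.toLp 2 x) := by
    have hnorm : ‖(WithLp.toLp 2 (M *ᵥ x) : EuclideanSpace ℝ ι)‖ ^ 2 = M *ᵥ x ⬝ᵥ M *ᵥ x := by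
      rw [← real_inner_self_eq_norm_sq, hinner]
    simpa [hinner, hnorm] using hle
  obtain ⟨μ, ⟨hμ0, hμB⟩, hμ⟩ := hT.exists_hasEigenvalue_mem_Ioc hpos' hle'
  obtain ⟨v, hv⟩ := hμ.exists_hasEigenvector
  refine le_trans (csInf_le ⟨0, fun r hr => hr.1.le⟩ ⟨hμ0, v.ofLp, ?_, ?_⟩) hμB
  · simpa using hv.2
  · simpa using congrArg WithLp.ofLp (Module.End.mem_eigenspace_iff.mp hv.1)

lemma six_mul_lt_of_le_choose_add_choose {n m t : ℕ}
    (hineq : 3 * (m - 1) * (m + 2) < (n - 1) * (n - 2))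
    (ht : t ≤ n.choose 3 + (m + 1).choose 2 - 1) : 6 * t < (n - 2) * (n - 1) * (n + 1) := by
  obtain ⟨k, rfl⟩ : ∃ k, n = k + 3 := ⟨n - 3, by
    rcases Nat.lt_or_ge n 3 with h | h
    · interval_cases n <;> simp at hineq
    · omega⟩
  have h3 : 6 * (k + 3).choose 3 = (k + 3) * (k + 2) * (k + 1) :=
    (Nat.descFactorial_eq_factorial_mul_choose (k + 3) 3).symm.trans
      (by show (k + 1) * ((k + 2) * ((k + 3) * 1)) = _; ring)
  have h2 : 2 * (m + 1).choose 2 = (m + 1) * m :=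
    (Nat.descFactorial_eq_factorial_mul_choose (m + 1) 2).symm.trans
      (by show m * ((m + 1) * 1) = _; ring)
  have hm : 3 * ((m + 1) * m) ≤ 3 * (m - 1) * (m + 2) + 6 := by
    rcases m with _ | j
    · simp
    · rw [Nat.add_sub_cancel]
      exact le_of_eq (by ring)
  have ht' : t + 1 ≤ (k + 3).choose 3 + (m + 1).choose 2 := by
    have : 1 ≤ (k + 3).choose 3 := Nat.choose_pos (by omega)
    omega
  simp only [show k + 3 - 1 = k + 2 by omega, show k + 3 - 2 = k + 1 by omega] at hineq ⊢
  nlinarith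

def edgeDeg (F : Finset (Finset ℕ)) (e : Finset ℕ) : ℕ := #{T ∈ F | e ⊆ T}

lemma abs_triSign {T e : Finset ℕ} (he : e.card = 2) (hT : T.card = 3) :
    |triSign T e| = if e ⊆ T then 1 else 0 := by
  unfold triSign
  split_ifs <;> simp_all

lemma eq_union_of_subset_of_subset {e f T : Finset ℕ} (hef : e ≠ f) (he : e.card = 2)
    (hf : f.card = 2) (hT : T.card = 3) (heT : e ⊆ T) (hfT : f ⊆ T) : T = e ∪ f := by
  have hcard : 3 ≤ (e ∪ f).card := by
    by_contra! h
    have h₁ := eq_of_subset_of_card_le (s := e) (t := e ∪ f) subset_union_left (by omega)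
    have h₂ := eq_of_subset_of_card_le (s := f) (t := e ∪ f) subset_union_right (by omega)
    exact hef (h₁.trans h₂.symm)
  exact (eq_of_subset_of_card_le (union_subset heT hfT) (by omega)).symm

section TriangleFamily

variable {F : Finset (Finset ℕ)}

lemma mem_edgesOf {e : Finset ℕ} : e ∈ edgesOf F ↔ ∃ T ∈ F, e ⊆ T ∧ e.card = 2 := by
  simp [edgesOf, mem_powersetCard]

lemma card_of_mem_edgesOf {e : Finset ℕ} (he : e ∈ edgesOf F) : e.card = 2 := by
  obtain ⟨_, _, _, h⟩ := mem_edgesOf.mp he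
  exact h

lemma card_le_choose_card_vertsOf (hF : ∀ T ∈ F, T.card = 3) :
    #F ≤ (#(vertsOf F)).choose 3 := by
  rw [← card_powersetCard]
  exact card_le_card fun T hT => mem_powersetCard.mpr ⟨subset_biUnion_of_mem id hT, hF T hT⟩

lemma card_edgesOf_mul_le (hF : ∀ T ∈ F, T.card = 3) {k : ℕ}
    (hk : ∀ e ∈ edgesOf F, k ≤ edgeDeg F e) : #(edgesOf F) * k ≤ #F * 3 := by
  refine card_mul_le_card_mul (fun e T : Finset ℕ => e ⊆ T) hk fun T hT => ?_
  calc #{e ∈ edgesOf F | e ⊆ T} ≤ #(T.powersetCard 2) :=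
        card_le_card fun e he => by
          rw [mem_filter] at he
          exact mem_powersetCard.mpr ⟨he.2, card_of_mem_edgesOf he.1⟩
    _ = 3 := by rw [card_powersetCard, hF T hT]; rfl

/-- The triangles `{x, y, z}` through an edge `{x, y}` give the further edges `{x, z}` at `x`. -/
lemma succ_le_card_filter_mem_edgesOf (hF : ∀ T ∈ F, T.card = 3) {k : ℕ}
    (hk : ∀ e ∈ edgesOf F, k ≤ edgeDeg F e) {x : ℕ} (hx : x ∈ vertsOf F) :
    k + 1 ≤ #{e ∈ edgesOf F | x ∈ e} := by
  obtain ⟨T, hT, hxT⟩ := mem_biUnion.mp hx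
  obtain ⟨y, hyT, hyx⟩ := exists_mem_ne (show 1 < T.card by rw [hF T hT]; omega) x
  have hxy : ({x, y} : Finset ℕ) ∈ edgesOf F :=
    mem_edgesOf.mpr ⟨T, hT, insert_subset hxT (singleton_subset_iff.mpr hyT),
      card_pair hyx.symm⟩
  set S : Finset (Finset ℕ) := {T' ∈ F | {x, y} ⊆ T'}
  have hmaps : Set.MapsTo (fun T' : Finset ℕ => T'.erase y) ↑S
      ↑(((edgesOf F).filter (x ∈ ·)).erase {x, y}) := by
    intro T' hT'
    obtain ⟨hT'F, hxyT'⟩ := mem_filter.mp hT'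
    obtain ⟨hxT', hyT'⟩ := insert_subset_iff.mp hxyT'
    refine mem_erase.mpr ⟨fun h => ?_, mem_filter.mpr ⟨?_, mem_erase.mpr ⟨hyx.symm, hxT'⟩⟩⟩
    · simpa using congrArg (y ∈ ·) h
    · refine mem_edgesOf.mpr ⟨T', hT'F, erase_subset _ _, ?_⟩
      rw [card_erase_of_mem (singleton_subset_iff.mp hyT'), hF T' hT'F]
  have hinj : Set.InjOn (fun T' : Finset ℕ => T'.erase y) ↑S :=
    (erase_injOn' y).mono fun T' hT' =>
      (mem_filter.mp hT').2 (mem_insert_of_mem (mem_singleton_self y))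
  have hmem : {x, y} ∈ (edgesOf F).filter (x ∈ ·) :=
    mem_filter.mpr ⟨hxy, mem_insert_self _ _⟩
  have hS := card_le_card_of_injOn _ hmaps hinj
  rw [card_erase_of_mem hmem] at hS
  have hkS : k ≤ #S := hk _ hxy
  have := card_pos.mpr ⟨_, hmem⟩
  omega

lemma card_vertsOf_mul_le (hF : ∀ T ∈ F, T.card = 3) {k : ℕ}
    (hk : ∀ e ∈ edgesOf F, k ≤ edgeDeg F e) : #(vertsOf F) * (k + 1) ≤ #(edgesOf F) * 2 := by
  refine card_mul_le_card_mul (· ∈ ·) (fun x hx => succ_le_card_filter_mem_edgesOf hF hk hx)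
    fun e he => ?_
  calc #{x ∈ vertsOf F | x ∈ e} ≤ #e := card_le_card fun x hx => (mem_filter.mp hx).2
    _ = 2 := card_of_mem_edgesOf he

lemma mul_succ_mul_card_vertsOf_le (hF : ∀ T ∈ F, T.card = 3) {k : ℕ}
    (hk : ∀ e ∈ edgesOf F, k ≤ edgeDeg F e) : k * (k + 1) * #(vertsOf F) ≤ 6 * #F :=
  calc k * (k + 1) * #(vertsOf F) = k * (#(vertsOf F) * (k + 1)) := by ring
    _ ≤ k * (#(edgesOf F) * 2) := Nat.mul_le_mul_left k (card_vertsOf_mul_le hF hk)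
    _ = 2 * (#(edgesOf F) * k) := by ring
    _ ≤ 2 * (#F * 3) := Nat.mul_le_mul_left 2 (card_edgesOf_mul_le hF hk)
    _ = 6 * #F := by ring

lemma exists_edgeDeg_add_three_le {n : ℕ} (hF : ∀ T ∈ F, T.card = 3) (hlow : n.choose 3 < #F)
    (hup : 6 * #F < (n - 2) * (n - 1) * (n + 1)) : ∃ e ∈ edgesOf F, edgeDeg F e + 3 ≤ n := by
  by_contra! hdeg
  have hk : ∀ e ∈ edgesOf F, n - 2 ≤ edgeDeg F e := fun e he => by have := hdeg e he; omega
  have hV : n + 1 ≤ #(vertsOf F) := by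
    by_contra! hV
    have := (card_le_choose_card_vertsOf hF).trans (Nat.choose_le_choose 3 (Nat.le_of_lt_succ hV))
    omega
  have hcount := mul_succ_mul_card_vertsOf_le hF hk
  rcases Nat.lt_or_ge n 2 with hn | hn
  · interval_cases n <;> simp at hup
  · rw [show n - 2 + 1 = n - 1 by omega] at hcount
    nlinarith [Nat.mul_le_mul_left ((n - 2) * (n - 1)) hV]

lemma delta1_transpose_mul_self_apply (f g : {e // e ∈ edgesOf F}) :
    ((delta1 F)ᵀ * delta1 F) f g = ∑ T ∈ F, triSign T f * triSign T g :=
  sum_coe_sort F fun T => triSign T f * triSign T g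

lemma sum_triSign_mul_self (hF : ∀ T ∈ F, T.card = 3) {e : Finset ℕ} (he : e.card = 2) :
    ∑ T ∈ F, triSign T e * triSign T e = edgeDeg F e := by
  rw [edgeDeg, card_filter, Nat.cast_sum]
  refine sum_congr rfl fun T hT => ?_
  rw [← abs_mul_abs_self, abs_triSign he (hF T hT)]
  split_ifs <;> simp

lemma abs_sum_triSign_mul_le (hF : ∀ T ∈ F, T.card = 3) {e f : Finset ℕ} (he : e.card = 2)
    (hf : f.card = 2) :
    |∑ T ∈ F, triSign T f * triSign T e| ≤ #{T ∈ F | f ⊆ T ∧ e ⊆ T} := by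
  refine (abs_sum_le_sum_abs _ _).trans (le_of_eq ?_)
  rw [card_filter, Nat.cast_sum]
  refine sum_congr rfl fun T hT => ?_
  rw [abs_mul, abs_triSign hf (hF T hT), abs_triSign he (hF T hT)]
  split_ifs <;> simp_all

lemma card_filter_subset_subset_le_one (hF : ∀ T ∈ F, T.card = 3) {e f : Finset ℕ}
    (hef : f ≠ e) (he : e.card = 2) (hf : f.card = 2) : #{T ∈ F | f ⊆ T ∧ e ⊆ T} ≤ 1 := by
  refine card_le_one.mpr fun T hT T' hT' => ?_
  rw [mem_filter] at hT hT'
  rw [eq_union_of_subset_of_subset hef hf he (hF T hT.1) hT.2.1 hT.2.2,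
    eq_union_of_subset_of_subset hef hf he (hF T' hT'.1) hT'.2.1 hT'.2.2]

lemma sum_card_filter_subset_subset_le (hF : ∀ T ∈ F, T.card = 3) {e : Finset ℕ}
    (he : e.card = 2) :
    ∑ f ∈ (edgesOf F).erase e, #{T ∈ F | f ⊆ T ∧ e ⊆ T} ≤ 2 * edgeDeg F e := by
  calc ∑ f ∈ (edgesOf F).erase e, #{T ∈ F | f ⊆ T ∧ e ⊆ T}
      = ∑ T ∈ F, #{f ∈ (edgesOf F).erase e | f ⊆ T ∧ e ⊆ T} := by
        simp only [card_filter]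
        exact sum_comm
    _ ≤ ∑ T ∈ F, if e ⊆ T then 2 else 0 := sum_le_sum fun T hT => ?_
    _ = 2 * edgeDeg F e := by rw [sum_ite, sum_const, sum_const_zero, edgeDeg]; ring
  split_ifs with heT
  · calc #{f ∈ (edgesOf F).erase e | f ⊆ T ∧ e ⊆ T} ≤ #((T.powersetCard 2).erase e) :=
          card_le_card fun f hf => by
            obtain ⟨hfE, hfT, -⟩ := mem_filter.mp hf
            obtain ⟨hfe, hfE⟩ := mem_erase.mp hfE
            exact mem_erase.mpr ⟨hfe, mem_powersetCard.mpr ⟨hfT, card_of_mem_edgesOf hfE⟩⟩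
      _ ≤ 2 := by
          rw [card_erase_of_mem (mem_powersetCard.mpr ⟨heT, he⟩), card_powersetCard, hF T hT]
          rfl
  · simp [heT]

lemma sum_sq_sum_triSign_mul_le (hF : ∀ T ∈ F, T.card = 3) {e : Finset ℕ}
    (he : e ∈ edgesOf F) :
    ∑ f ∈ edgesOf F, (∑ T ∈ F, triSign T f * triSign T e) ^ 2 ≤
      (edgeDeg F e + 2) * edgeDeg F e := by
  have he2 := card_of_mem_edgesOf he
  have hoff : ∀ f ∈ (edgesOf F).erase e,
      (∑ T ∈ F, triSign T f * triSign T e) ^ 2 ≤ #{T ∈ F | f ⊆ T ∧ e ⊆ T} := by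
    intro f hf
    obtain ⟨hfe, hfE⟩ := mem_erase.mp hf
    have hle := abs_sum_triSign_mul_le hF he2 (card_of_mem_edgesOf hfE)
    have hle1 : (#{T ∈ F | f ⊆ T ∧ e ⊆ T} : ℝ) ≤ 1 := by
      exact_mod_cast card_filter_subset_subset_le_one hF hfe he2 (card_of_mem_edgesOf hfE)
    rw [← sq_abs]
    nlinarith [abs_nonneg (∑ T ∈ F, triSign T f * triSign T e)]
  have hsum : (∑ f ∈ (edgesOf F).erase e, #{T ∈ F | f ⊆ T ∧ e ⊆ T} : ℝ) ≤ 2 * edgeDeg F e := by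
    exact_mod_cast sum_card_filter_subset_subset_le hF he2
  rw [← add_sum_erase _ _ he, sum_triSign_mul_self hF he2]
  nlinarith [sum_le_sum hoff]

lemma lam_le_edgeDeg_add_two (hF : ∀ T ∈ F, T.card = 3) {e : Finset ℕ} (he : e ∈ edgesOf F) :
    lam F ≤ edgeDeg F e + 2 := by
  set M := (delta1 F)ᵀ * delta1 F
  have hM : M.IsHermitian := by
    simpa [conjTranspose_eq_transpose_of_trivial] using
      isHermitian_conjTranspose_mul_self (delta1 F)
  set x : {e // e ∈ edgesOf F} → ℝ := Pi.single ⟨e, he⟩ 1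
  have hcol : ∀ f, (M *ᵥ x) f = ∑ T ∈ F, triSign T f * triSign T e := fun f => by
    rw [mulVec_single_one, col_apply]
    exact delta1_transpose_mul_self_apply f ⟨e, he⟩
  have hdiag : M *ᵥ x ⬝ᵥ x = edgeDeg F e := by
    rw [dotProduct_single, mul_one, hcol, sum_triSign_mul_self hF (card_of_mem_edgesOf he)]
  have hnorm : M *ᵥ x ⬝ᵥ M *ᵥ x ≤ (edgeDeg F e + 2) * (M *ᵥ x ⬝ᵥ x) := by
    rw [hdiag, dotProduct]
    simp_rw [hcol, ← sq]
    exact (sum_coe_sort (edgesOf F) fun f => (∑ T ∈ F, triSign T f * triSign T e) ^ 2).trans_le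
      (sum_sq_sum_triSign_mul_le hF he)
  obtain ⟨T, hT, heT, -⟩ := mem_edgesOf.mp he
  have hpos : (0 : ℝ) < edgeDeg F e :=
    Nat.cast_pos.mpr (card_pos.mpr ⟨T, mem_filter.mpr ⟨hT, heT⟩⟩)
  exact lambdaMinPos_le_of_dotProduct_le hM (hdiag ▸ hpos) hnorm

end TriangleFamily

theorem stmt10_general (n m : ℕ)
    (hineq : 3 * (m - 1) * (m + 2) < (n - 1) * (n - 2)) :
    ∀ t : ℕ, n.choose 3 + 1 ≤ t → t ≤ n.choose 3 + (m + 1).choose 2 - 1 →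
      phi t ≤ (n : ℝ) - 1 := by
  intro t ht₁ ht₂
  have hn : (1 : ℝ) ≤ n := by
    exact_mod_cast Nat.pos_of_ne_zero (by rintro rfl; simp at hineq)
  refine Real.sSup_le ?_ (by linarith)
  rintro _ ⟨F, hF, rfl, rfl⟩
  obtain ⟨e, he, hdeg⟩ := exists_edgeDeg_add_three_le hF.2 (by omega)
    (six_mul_lt_of_le_choose_add_choose hineq ht₂)
  have hdeg' : (edgeDeg F e : ℝ) + 3 ≤ n := by exact_mod_cast hdeg
  linarith [lam_le_edgeDeg_add_two hF.2 he]

/-- Forbidden interval: if `n ≥ 3` and `m ≥ 1` satisfies `3(m-1)(m+2) < (n-1)(n-2)`,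
then `φ(t) ≤ n - 1` for all `C(n,3) + 1 ≤ t ≤ C(n,3) + C(m+1,2) - 1`. -/
theorem stmt10 (n m : ℕ) (hn : 3 ≤ n) (hm : 1 ≤ m)
    (hineq : 3 * (m - 1) * (m + 2) < (n - 1) * (n - 2)) :
    ∀ t : ℕ, n.choose 3 + 1 ≤ t → t ≤ n.choose 3 + (m + 1).choose 2 - 1 →
      phi t ≤ (n : ℝ) - 1 :=
  stmt10_general n m hineq
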